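/- arXiv:1801.01149 — 5 statements merged into one kernel-verified Lean document; each statement's English description precedes it below -/
import Mathlib

section
/- Let G be a graph with adjacency matrix A over GF(2), and let G_X be obtained from G by Seidel switching with respect to X, the neighborhood of a vertex x. If the all-ones vector 1 lies in the column space of A over GF(2), then the 2-rank of G_X equals the 2-rank of G minus 2; otherwise the 2-rank of G_X equals the 2-rank of G. -/
/-!
Over GF(2), switching with respect to `N(x)` is the congruence `A ↦ Sᵀ A S` by the projection
`S = 1 - eₓ 1ᵀ` onto the hyperplane `H = 1^⊥` along `eₓ`: the switched graph carries the
restriction of the alternating form `A` to `H`. As `ker Sᵀ = span 1`, the kernel of `Sᵀ A S` is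
`span eₓ ⊕ (H ∩ A⁻¹(span 1))`. If `1 = A u`, then `A⁻¹(span 1) = ker A ⊕ span u` lies in `H`
because `A` is alternating, and the nullity grows by two. Otherwise `A⁻¹(span 1) = ker A`, which
is not contained in `H` since `range A = (ker A)^⊥`, and the nullity is unchanged.
-/

open Matrix LinearMap Module

namespace Submodule

variable {F V W : Type*} [Field F] [AddCommGroup V] [Module F V] [AddCommGroup W] [Module F W]
  [FiniteDimensional F V]

theorem finrank_comap (f : V →ₗ[F] W) (U : Submodule F W) :
    finrank F (U.comap f) = finrank F ↥(range f ⊓ U) + finrank F (ker f) := by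
  have key := (f.domRestrict (U.comap f)).finrank_range_add_finrank_ker
  rwa [range_domRestrict, map_comap_eq, ker_domRestrict,
    (comapSubtypeEquivOfLe (ker_le_comap f)).finrank_eq, eq_comm] at key

theorem finrank_inf_ker_add_one {p : Submodule F V} {φ : Dual F V} {k : V} (hk : k ∈ p)
    (hφk : φ k ≠ 0) : finrank F ↥(p ⊓ ker φ) + 1 = finrank F p := by
  have hφ : φ.domRestrict p ≠ 0 := fun h => hφk (LinearMap.congr_fun h ⟨k, hk⟩)
  have key := Dual.finrank_ker_add_one_of_ne_zero hφ
  rwa [ker_domRestrict, finrank_comap, range_subtype, ker_subtype, finrank_bot, add_zero] at key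

end Submodule

namespace Matrix

section CommRing

variable {R n : Type*} [CommRing R] [Fintype n]

theorem dotProduct_mulVec_self_eq_zero {A : Matrix n n R} (hA : Aᵀ = -A) (hd : ∀ i, A i i = 0)
    (v : n → R) : v ⬝ᵥ A *ᵥ v = 0 := by
  simp only [mulVec, dotProduct, Finset.mul_sum, ← Finset.sum_product']
  refine Finset.sum_involution (fun p _ => p.swap) (fun p _ => ?_) (fun p _ hp h => hp ?_)
    (fun p _ => Finset.mem_univ _) (fun p _ => p.swap_swap)
  · have : A p.2 p.1 = -A p.1 p.2 := by rw [← transpose_apply A, hA, neg_apply]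
    simp only [Prod.fst_swap, Prod.snd_swap, this]
    ring
  · obtain ⟨i, j⟩ := p
    cases congrArg Prod.fst h
    simp [hd]

theorem dotProduct_mulVec_eq_neg_of_transpose_eq_neg {A : Matrix n n R} (hA : Aᵀ = -A)
    (u v : n → R) :
    u ⬝ᵥ A *ᵥ v = -(v ⬝ᵥ A *ᵥ u) := by
  rw [dotProduct_mulVec, ← mulVec_transpose, hA, neg_mulVec, neg_dotProduct, dotProduct_comm]

theorem one_sub_vecMulVec_mulVec [DecidableEq n] (e w v : n → R) :
    (1 - vecMulVec e w) *ᵥ v = v - (w ⬝ᵥ v) • e := by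
  ext i
  simp [sub_mulVec, vecMulVec_mulVec]

variable [DecidableEq n] {e w : n → R}

theorem ker_mulVecLin_one_sub_vecMulVec (he : w ⬝ᵥ e = 1) :
    ker (1 - vecMulVec e w).mulVecLin = R ∙ e := by
  ext v
  simp only [mem_ker, mulVecLin_apply, one_sub_vecMulVec_mulVec, Submodule.mem_span_singleton,
    sub_eq_zero]
  constructor
  · intro h; exact ⟨_, h.symm⟩
  · rintro ⟨t, rfl⟩
    rw [dotProduct_smul, he, smul_eq_mul, mul_one]

theorem range_mulVecLin_one_sub_vecMulVec (he : w ⬝ᵥ e = 1) :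
    range (1 - vecMulVec e w).mulVecLin = ker (dotProductEquiv R n w) := by
  ext v
  simp only [mem_range, mem_ker, mulVecLin_apply, one_sub_vecMulVec_mulVec,
    dotProductEquiv_apply_apply]
  constructor
  · rintro ⟨u, rfl⟩
    rw [dotProduct_sub, dotProduct_smul, he, smul_eq_mul, mul_one, sub_self]
  · intro h
    exact ⟨v, by rw [h, zero_smul, sub_zero]⟩

theorem transpose_mul_mul_one_sub_vecMulVec {A : Matrix n n R} (hA : Aᵀ = -A)
    (hd : ∀ i, A i i = 0) (e w : n → R) :
    (1 - vecMulVec e w)ᵀ * A * (1 - vecMulVec e w)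
      = A + vecMulVec w (A *ᵥ e) - vecMulVec (A *ᵥ e) w := by
  have hvec : e ᵥ* A = -(A *ᵥ e) := by rw [← mulVec_transpose, hA, neg_mulVec]
  have hquad : e ⬝ᵥ A *ᵥ e = 0 := dotProduct_mulVec_self_eq_zero hA hd e
  simp only [transpose_sub, transpose_one, transpose_vecMulVec, sub_mul, mul_sub, one_mul, mul_one,
    vecMulVec_mul, mul_vecMulVec, hvec]
  rw [vecMulVec_mulVec, neg_dotProduct, dotProduct_comm, hquad, neg_zero, MulOpposite.op_zero,
    zero_smul, zero_vecMulVec, vecMulVec_neg]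
  abel

end CommRing

section Field

variable {F m n : Type*} [Field F] [Fintype n]

theorem rank_add_finrank_ker (A : Matrix m n F) :
    A.rank + finrank F (ker A.mulVecLin) = Fintype.card n := by
  rw [rank, finrank_range_add_finrank_ker, finrank_fintype_fun_eq_card]

theorem mem_range_mulVecLin_transpose_iff [Fintype m] [DecidableEq m] [DecidableEq n]
    (A : Matrix m n F) (w : n → F) :
    w ∈ range Aᵀ.mulVecLin ↔ ∀ k, A *ᵥ k = 0 → w ⬝ᵥ k = 0 := by
  constructor
  · rintro ⟨y, rfl⟩ k hk
    rw [mulVecLin_apply, mulVec_transpose, ← dotProduct_mulVec, hk, dotProduct_zero]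
  · intro h
    have hw : dotProductEquiv F n w ∈ (ker A.mulVecLin).dualAnnihilator :=
      (Submodule.mem_dualAnnihilator _).2 h
    obtain ⟨ψ, hψ⟩ := (range_dualMap_eq_dualAnnihilator_ker A.mulVecLin).symm ▸ hw
    have hy := (dotProductEquiv F m).apply_symm_apply ψ
    set y := (dotProductEquiv F m).symm ψ
    refine ⟨y, (dotProductEquiv F n).injective (LinearMap.ext fun k => ?_)⟩
    calc (Aᵀ *ᵥ y) ⬝ᵥ k = y ⬝ᵥ A *ᵥ k := by rw [mulVec_transpose, dotProduct_mulVec]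
      _ = ψ (A *ᵥ k) := LinearMap.congr_fun hy (A *ᵥ k)
      _ = w ⬝ᵥ k := LinearMap.congr_fun hψ k

variable [DecidableEq n] {A : Matrix n n F} {e w : n → F}

theorem finrank_ker_transpose_mul_mul_one_sub_vecMulVec (he : w ⬝ᵥ e = 1) :
    finrank F (ker ((1 - vecMulVec e w)ᵀ * A * (1 - vecMulVec e w)).mulVecLin)
      = finrank F ↥(ker (dotProductEquiv F n w) ⊓ (F ∙ w).comap A.mulVecLin) + 1 := by
  have he' : e ⬝ᵥ w = 1 := by rwa [dotProduct_comm]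
  have he0 : e ≠ 0 := by rintro rfl; simp at he
  rw [mulVecLin_mul, mulVecLin_mul, ker_comp, ker_comp, transpose_sub, transpose_one,
    transpose_vecMulVec, ker_mulVecLin_one_sub_vecMulVec he', Submodule.finrank_comap,
    range_mulVecLin_one_sub_vecMulVec he, ker_mulVecLin_one_sub_vecMulVec he,
    finrank_span_singleton he0]

theorem finrank_ker_transpose_mul_mul_one_sub_vecMulVec_of_mem_range (hA : Aᵀ = -A)
    (hd : ∀ i, A i i = 0) (he : w ⬝ᵥ e = 1) (hw : w ∈ range A.mulVecLin) :
    finrank F (ker ((1 - vecMulVec e w)ᵀ * A * (1 - vecMulVec e w)).mulVecLin)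
      = finrank F (ker A.mulVecLin) + 2 := by
  obtain ⟨u, hu⟩ := hw
  rw [mulVecLin_apply] at hu
  have hw0 : w ≠ 0 := by rintro rfl; simp at he
  have hle : (F ∙ w).comap A.mulVecLin ≤ ker (dotProductEquiv F n w) := by
    intro v hv
    obtain ⟨t, ht⟩ := Submodule.mem_span_singleton.1 hv
    rw [mulVecLin_apply] at ht
    rw [mem_ker, dotProductEquiv_apply_apply, ← hu, dotProduct_comm,
      dotProduct_mulVec_eq_neg_of_transpose_eq_neg hA, ← ht, dotProduct_smul, ← hu,
      dotProduct_mulVec_self_eq_zero hA hd, smul_zero, neg_zero]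
  rw [finrank_ker_transpose_mul_mul_one_sub_vecMulVec he, inf_eq_right.2 hle,
    Submodule.finrank_comap,
    inf_eq_right.2 ((Submodule.span_singleton_le_iff_mem _ _).2 (mem_range.2 ⟨u, hu⟩)),
    finrank_span_singleton hw0]
  ring

theorem finrank_ker_transpose_mul_mul_one_sub_vecMulVec_of_notMem_range (hA : Aᵀ = -A)
    (he : w ⬝ᵥ e = 1) (hw : w ∉ range A.mulVecLin) :
    finrank F (ker ((1 - vecMulVec e w)ᵀ * A * (1 - vecMulVec e w)).mulVecLin)
      = finrank F (ker A.mulVecLin) := by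
  have hU : (F ∙ w).comap A.mulVecLin = ker A.mulVecLin := by
    ext v
    simp only [Submodule.mem_comap, mem_ker, mulVecLin_apply, Submodule.mem_span_singleton]
    constructor
    · rintro ⟨t, ht⟩
      by_cases t0 : t = 0
      · rw [← ht, t0, zero_smul]
      · refine absurd ⟨t⁻¹ • v, ?_⟩ hw
        rw [mulVecLin_apply, mulVec_smul, ← ht, inv_smul_smul₀ t0]
    · intro hv
      exact ⟨0, by rw [hv, zero_smul]⟩
  obtain ⟨k, hk, hwk⟩ : ∃ k, A *ᵥ k = 0 ∧ w ⬝ᵥ k ≠ 0 := by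
    by_contra! h
    obtain ⟨y, hy⟩ := (mem_range_mulVecLin_transpose_iff A w).2 h
    refine hw ⟨-y, ?_⟩
    rw [← hy, mulVecLin_apply, mulVecLin_apply, hA, neg_mulVec, mulVec_neg]
  rw [finrank_ker_transpose_mul_mul_one_sub_vecMulVec he, hU, inf_comm,
    Submodule.finrank_inf_ker_add_one hk hwk]

theorem rank_transpose_mul_mul_one_sub_vecMulVec (hA : Aᵀ = -A) (hd : ∀ i, A i i = 0)
    (he : w ⬝ᵥ e = 1) :
    (w ∈ range A.mulVecLin → ((1 - vecMulVec e w)ᵀ * A * (1 - vecMulVec e w)).rank + 2 = A.rank) ∧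
    (w ∉ range A.mulVecLin → ((1 - vecMulVec e w)ᵀ * A * (1 - vecMulVec e w)).rank = A.rank) := by
  have hA' := rank_add_finrank_ker A
  have hB := rank_add_finrank_ker ((1 - vecMulVec e w)ᵀ * A * (1 - vecMulVec e w))
  refine ⟨fun hw => ?_, fun hw => ?_⟩
  · have := finrank_ker_transpose_mul_mul_one_sub_vecMulVec_of_mem_range hA hd he hw
    omega
  · have := finrank_ker_transpose_mul_mul_one_sub_vecMulVec_of_notMem_range hA he hw
    omega

end Field

end Matrix

/-- Seidel switching with respect to the neighborhood `X = N(x)` of a vertex `x`: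
over GF(2) the switched graph has adjacency matrix `A + K` where `K i j = 1` iff
exactly one of `i, j` lies in `X`.  If the all-ones vector lies in the GF(2)
column space of `A`, the 2-rank drops by 2; otherwise it is unchanged. -/
theorem seidel_switching_neighborhood_two_rank {V : Type*} [Fintype V] [DecidableEq V]
    (G : SimpleGraph V) [DecidableRel G.Adj] (x : V)
    (A : Matrix V V (ZMod 2)) (hA : A = G.adjMatrix (ZMod 2))
    (K : Matrix V V (ZMod 2))
    (hK : ∀ i j, K i j = if (G.Adj x i ↔ G.Adj x j) then 0 else 1) :
    ((1 : V → ZMod 2) ∈ LinearMap.range A.mulVecLin → (A + K).rank + 2 = A.rank) ∧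
    ((1 : V → ZMod 2) ∉ LinearMap.range A.mulVecLin → (A + K).rank = A.rank) := by
  have hskew : Aᵀ = -A := by
    ext i j
    rw [neg_apply, ZMod.neg_eq_self_mod_two, hA, G.transpose_adjMatrix]
  have hd : ∀ i, A i i = 0 := by simp [hA]
  have he : (1 : V → ZMod 2) ⬝ᵥ Pi.single x 1 = 1 := by simp
  have hswitch :
      A + K = (1 - vecMulVec (Pi.single x 1) 1)ᵀ * A * (1 - vecMulVec (Pi.single x 1) 1) := by
    rw [transpose_mul_mul_one_sub_vecMulVec hskew hd]
    ext i j
    rw [Matrix.add_apply, hK, Matrix.sub_apply, Matrix.add_apply, mulVec_single_one, hA]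
    by_cases hi : G.Adj x i <;> by_cases hj : G.Adj x j <;>
      simp [hi, hj, G.adj_comm, sub_eq_add_neg, ZMod.neg_eq_self_mod_two, add_assoc,
        CharTwo.add_self_eq_zero]
  rw [hswitch]
  exact rank_transpose_mul_mul_one_sub_vecMulVec hskew hd he
end

section
/- Let A be the adjacency matrix over GF(2) of a graph G, x a vertex, X = N(x) its neighborhood with characteristic vector x̄, and A_X = A + K the adjacency matrix after Seidel switching with respect to X (where K_{uv}=1 iff exactly one of u,v is in X). Then the GF(2) column space of the augmented matrix [A_X | 1 | x̄] equals the column space of [A | 1]. -/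
/-!
Over GF(2) the switching matrix is `K i j = x̄ i + x̄ j`, so the `j`-th column of `A + K`
differs from that of `A` by `x̄ + x̄ j • 1 ∈ span {1, x̄}`. Hence both column spaces agree once
`1` and `x̄` are adjoined, and `x̄` is redundant on the side of `A`, being the column of `x`.
-/

open Submodule Set

section SpanRange

variable {R M ι : Type*} [Ring R] [AddCommGroup M] [Module R M]

theorem span_range_union_le_of_sub_mem {f g : ι → M} {t : Set M}
    (h : ∀ j, g j - f j ∈ span R t) : span R (range g ∪ t) ≤ span R (range f ∪ t) := by
  rw [span_le]
  rintro v (⟨j, rfl⟩ | hv)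
  · rw [← sub_add_cancel (g j) (f j)]
    exact add_mem (span_mono subset_union_right (h j)) (subset_span (Or.inl ⟨j, rfl⟩))
  · exact subset_span (Or.inr hv)

theorem span_range_union_eq_of_sub_mem {f g : ι → M} {t : Set M}
    (h : ∀ j, g j - f j ∈ span R t) : span R (range g ∪ t) = span R (range f ∪ t) :=
  le_antisymm (span_range_union_le_of_sub_mem h)
    (span_range_union_le_of_sub_mem fun j => by simpa using neg_mem (h j))

theorem span_range_union_pair_eq {f g : ι → M} {v w : M} (hw : w ∈ span R (range f ∪ {v}))
    (h : ∀ j, g j - f j ∈ span R {v, w}) :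
    span R (range g ∪ {v, w}) = span R (range f ∪ {v}) := by
  have hset : range f ∪ {v, w} = insert w (range f ∪ {v}) := by
    ext; simp only [mem_union, mem_insert_iff, mem_singleton_iff]; tauto
  rw [span_range_union_eq_of_sub_mem h, hset, span_insert_eq_span hw]

end SpanRange

theorem ZMod.two_ite_iff_eq_add (p q : Prop) [Decidable p] [Decidable q] :
    (if (p ↔ q) then 0 else 1 : ZMod 2) = (if p then 1 else 0) + (if q then 1 else 0) := by
  by_cases hp : p <;> by_cases hq : q <;> simp [hp, hq]; decide

theorem seidel_switching_augmented_colSpace_general {V : Type*}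
    (G : SimpleGraph V) [DecidableRel G.Adj] (x : V)
    (A : Matrix V V (ZMod 2)) (hA : A = G.adjMatrix (ZMod 2))
    (xbar : V → ZMod 2) (hxbar : ∀ i, xbar i = if G.Adj x i then 1 else 0)
    (K : Matrix V V (ZMod 2))
    (hK : ∀ i j, K i j = if (G.Adj x i ↔ G.Adj x j) then 0 else 1) :
    Submodule.span (ZMod 2) (Set.range (A + K).transpose ∪ {(1 : V → ZMod 2), xbar}) =
      Submodule.span (ZMod 2) (Set.range A.transpose ∪ {(1 : V → ZMod 2)}) := by
  have hxbar_col : xbar = A.transpose x := by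
    funext i
    rw [hxbar, hA, SimpleGraph.transpose_adjMatrix, SimpleGraph.adjMatrix_apply]
  have hcol_diff : ∀ j, (A + K).transpose j - A.transpose j = xbar + xbar j • 1 := by
    intro j
    funext i
    simp only [Matrix.transpose_add, Pi.sub_apply, Matrix.add_apply, add_sub_cancel_left,
      Matrix.transpose_apply, hK, ZMod.two_ite_iff_eq_add, ← hxbar, Pi.add_apply,
      Pi.smul_apply, Pi.one_apply, smul_eq_mul, mul_one]
  refine span_range_union_pair_eq ?_ fun j => ?_
  · exact hxbar_col ▸ subset_span (Or.inl ⟨x, rfl⟩)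
  · rw [hcol_diff]
    exact add_mem (subset_span (Or.inr rfl)) (smul_mem _ _ (subset_span (Or.inl rfl)))

/-- With `A` the GF(2) adjacency matrix of `G`, `x` a vertex, `xbar` the characteristic
vector of `X = N(x)` and `A + K` the matrix after Seidel switching with respect to `X`
(`K i j = 1` iff exactly one of `i, j` is in `X`), the GF(2) column space of the
augmented matrix `[A_X | 1 | xbar]` equals the column space of `[A | 1]`. -/
theorem seidel_switching_augmented_colSpace {V : Type*} [Fintype V] [DecidableEq V]
    (G : SimpleGraph V) [DecidableRel G.Adj] (x : V)
    (A : Matrix V V (ZMod 2)) (hA : A = G.adjMatrix (ZMod 2))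
    (xbar : V → ZMod 2) (hxbar : ∀ i, xbar i = if G.Adj x i then 1 else 0)
    (K : Matrix V V (ZMod 2))
    (hK : ∀ i j, K i j = if (G.Adj x i ↔ G.Adj x j) then 0 else 1) :
    Submodule.span (ZMod 2) (Set.range (A + K).transpose ∪ {(1 : V → ZMod 2), xbar}) =
      Submodule.span (ZMod 2) (Set.range A.transpose ∪ {(1 : V → ZMod 2)}) :=
  seidel_switching_augmented_colSpace_general G x A hA xbar hxbar K hK
end

section
/- Let G be a graph with adjacency matrix A, and W a vertex subset inducing a regular subgraph such that every vertex outside W has |W|, |W|/2 or 0 neighbors in W. Let L be the 0–1 matrix with L_{ij} = 1 iff (i ∈ W, j ∉ W and j has |W|/2 neighbors in W) or symmetrically (j ∈ W, i ∉ W and i has |W|/2 neighbors in W). Then rank(L) over GF(2) is at most 2, and therefore the 2-rank of the GM-switched graph G_W (with adjacency matrix A + L over GF(2)) lies in {2-rank(G) − 2, 2-rank(G), 2-rank(G) + 2}. -/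
/-!
Write `L = u vᵀ + v uᵀ`, where `u` is the indicator of `W` and `v` that of the half-joined
vertices outside `W`; this has rank at most `2`, so the ranks of `A` and `A + L` differ by at
most `2`. Both matrices are symmetric with zero diagonal, hence alternating over GF(2), and
alternating matrices have even rank: if `B x y = 1`, composing `B` with the projection along
`span {x, y}` onto its `B`-orthogonal gives an alternating form whose range is exactly two
dimensions smaller.
-/

open Module

namespace LinearMap

variable {K V : Type*} [Field K] [AddCommGroup V] [Module K V]

/-- For `B x y = 1`, the map `z ↦ z + B z x • y - B z y • x` is the projection along
`span {x, y}` onto its `B`-orthogonal. -/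
def pairReduction (B : V →ₗ[K] V →ₗ[K] K) (x y : V) : V →ₗ[K] V →ₗ[K] K :=
  B ∘ₗ (LinearMap.id + (B.flip x).smulRight y - (B.flip y).smulRight x)

theorem pairReduction_apply (B : V →ₗ[K] V →ₗ[K] K) (x y z w : V) :
    B.pairReduction x y z w = B z w + B z x * B y w - B z y * B x w := by
  simp [pairReduction]

theorem range_eq_range_pairReduction_sup_span (B : V →ₗ[K] V →ₗ[K] K) (x y : V) :
    range B = range (B.pairReduction x y) ⊔ Submodule.span K {B x, B y} := by
  refine le_antisymm ?_ (sup_le (range_comp_le_range _ _) ?_)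
  · rintro _ ⟨z, rfl⟩
    have hsplit : B z = B.pairReduction x y z + (B z y • B x - B z x • B y) := by
      ext w
      simp only [pairReduction_apply, add_apply, sub_apply, smul_apply, smul_eq_mul]
      ring
    rw [hsplit]
    exact Submodule.add_mem_sup (mem_range_self _ _) (Submodule.sub_mem _
      (Submodule.smul_mem _ _ (Submodule.subset_span (by simp)))
      (Submodule.smul_mem _ _ (Submodule.subset_span (by simp))))
  · exact Submodule.span_le.2 (by simp [Set.insert_subset_iff])

namespace IsAlt

variable {B : V →ₗ[K] V →ₗ[K] K}

protected theorem pairReduction (hB : B.IsAlt) (x y : V) : (B.pairReduction x y).IsAlt := by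
  intro z
  rw [pairReduction_apply, hB.self_eq_zero, ← hB.neg y z, ← hB.neg x z]
  ring

theorem eq_zero_of_pairReduction_eq (hB : B.IsAlt) {x y : V} (hxy : B x y = 1) {z : V} {a b : K}
    (h : B.pairReduction x y z = a • B x + b • B y) : a = 0 ∧ b = 0 := by
  have hyx : B y x = -1 := by rw [← hB.neg, hxy]
  have hx := LinearMap.congr_fun h x
  have hy := LinearMap.congr_fun h y
  simp only [pairReduction_apply, add_apply, smul_apply, smul_eq_mul, hxy, hyx,
    hB.self_eq_zero] at hx hy
  exact ⟨by linear_combination -hy, by linear_combination hx⟩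

theorem finrank_range_pairReduction_add_two [FiniteDimensional K V] (hB : B.IsAlt) {x y : V}
    (hxy : B x y = 1) :
    finrank K (range (B.pairReduction x y)) + 2 = finrank K (range B) := by
  have hdisj : range (B.pairReduction x y) ⊓ Submodule.span K {B x, B y} = ⊥ := by
    refine (Submodule.disjoint_def.2 ?_).eq_bot
    rintro _ ⟨z, rfl⟩ hz
    obtain ⟨a, b, hab⟩ := Submodule.mem_span_pair.1 hz
    obtain ⟨rfl, rfl⟩ := hB.eq_zero_of_pairReduction_eq hxy hab.symm
    simpa using hab.symm
  have hpair : finrank K (Submodule.span K {B x, B y}) = 2 := by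
    have hind : LinearIndependent K ![B x, B y] := LinearIndependent.pair_iff.2
      fun a b h => hB.eq_zero_of_pairReduction_eq hxy (z := 0) (by simpa using h.symm)
    rw [← Matrix.range_cons_cons_empty _ _ ![], finrank_span_eq_card hind, Fintype.card_fin]
  rw [range_eq_range_pairReduction_sup_span B x y, ← hpair,
    ← Submodule.finrank_sup_add_finrank_inf_eq, hdisj, finrank_bot, add_zero]

theorem even_finrank_range [FiniteDimensional K V] (hB : B.IsAlt) :
    Even (finrank K (range B)) := by
  induction hr : finrank K (range B) using Nat.strong_induction_on generalizing B with
  | _ r ih =>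
    by_cases hB0 : B = 0
    · subst hB0
      rw [← hr, range_zero, finrank_bot]
      exact Even.zero
    obtain ⟨x, y, hxy⟩ : ∃ x y, B x y ≠ 0 := by
      by_contra! h
      exact hB0 (ext₂ h)
    have hred := hB.finrank_range_pairReduction_add_two (x := (B x y)⁻¹ • x) (y := y)
      (by simp [hxy])
    obtain ⟨k, hk⟩ := ih _ (by omega) (hB.pairReduction ((B x y)⁻¹ • x) y) rfl
    exact ⟨k + 1, by omega⟩

end IsAlt

end LinearMap

namespace Matrix

variable {m n K : Type*} [Fintype n] [Field K]

theorem rank_add_le (A B : Matrix m n K) : (A + B).rank ≤ A.rank + B.rank := by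
  rw [rank, mulVecLin_add]
  exact (Submodule.finrank_mono (LinearMap.range_add_le _ _)).trans
    (Submodule.finrank_add_le_finrank_add_finrank _ _)

theorem rank_neg (A : Matrix m n K) : (-A).rank = A.rank := by
  have hneg : (-A).mulVecLin = -A.mulVecLin := by
    ext
    simp
  rw [rank, rank, hneg, LinearMap.range_neg]

theorem rank_add_mem_of_even {A L : Matrix m n K} (hA : Even A.rank) (hAL : Even (A + L).rank)
    (hL : L.rank ≤ 2) : (A + L).rank ∈ ({A.rank - 2, A.rank, A.rank + 2} : Set ℕ) := by
  have hup := rank_add_le A L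
  have hdown := rank_add_le (A + L) (-L)
  rw [add_neg_cancel_right, rank_neg] at hdown
  obtain ⟨a, ha⟩ := hA
  obtain ⟨b, hb⟩ := hAL
  simp only [Set.mem_insert_iff, Set.mem_singleton_iff]
  omega

theorem isAlt_toBilin' [DecidableEq n] {R : Type*} [CommRing R] {M : Matrix n n R}
    (hskew : Mᵀ = -M) (hdiag : ∀ i, M i i = 0) : LinearMap.IsAlt (toBilin' M) := by
  intro x
  rw [toBilin'_apply, ← Finset.sum_product']
  refine Finset.sum_ninvolution Prod.swap (fun p => ?_) (fun p hp => ?_) (by simp) (by simp)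
  · have := congr_fun₂ hskew p.1 p.2
    simp only [transpose_apply, neg_apply] at this
    simp only [Prod.fst_swap, Prod.snd_swap, this]
    ring
  · intro h
    have : p.1 = p.2 := by simpa [Prod.ext_iff, eq_comm] using h
    simp [this, hdiag] at hp

theorem rank_eq_finrank_range_toBilin' [DecidableEq n] (M : Matrix n n K) :
    M.rank = finrank K (LinearMap.range (toBilin' M)) := by
  have hcomp : toBilin' M = (dotProductEquiv K n).toLinearMap ∘ₗ Mᵀ.mulVecLin := by
    ext x y
    simp [toBilin'_apply']
  rw [hcomp, LinearMap.range_comp, LinearEquiv.finrank_map_eq, ← rank, rank_transpose]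

theorem even_rank_of_transpose_eq_neg {M : Matrix n n K} (hskew : Mᵀ = -M)
    (hdiag : ∀ i, M i i = 0) : Even M.rank := by
  classical
  rw [rank_eq_finrank_range_toBilin']
  exact (isAlt_toBilin' hskew hdiag).even_finrank_range

theorem vecMulVec_indicator_add_vecMulVec_indicator_apply {n R : Type*} [NonAssocSemiring R]
    [DecidableEq n] {S T : Finset n} (hST : Disjoint S T) (i j : n) :
    (vecMulVec (fun k => if k ∈ S then 1 else 0) (fun k => if k ∈ T then 1 else 0) +
      vecMulVec (fun k => if k ∈ T then 1 else 0) (fun k => if k ∈ S then 1 else 0) :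
        Matrix n n R) i j =
      if (i ∈ S ∧ j ∈ T) ∨ (j ∈ S ∧ i ∈ T) then 1 else 0 := by
  have hS : ∀ k ∈ S, k ∉ T := fun _ => (Finset.disjoint_left.1 hST ·)
  by_cases hi : i ∈ S <;> by_cases hj : j ∈ S <;> simp [vecMulVec_apply, hi, hj, hS]

end Matrix

open Matrix

theorem gm_switching_two_rank_general {V : Type*} [Fintype V] [DecidableEq V]
    (G : SimpleGraph V) [DecidableRel G.Adj] (W : Finset V)
    (A : Matrix V V (ZMod 2)) (hA : A = G.adjMatrix (ZMod 2))
    (L : Matrix V V (ZMod 2))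
    (hL : ∀ i j, L i j =
      if (i ∈ W ∧ j ∉ W ∧ 2 * (W.filter (G.Adj j)).card = W.card) ∨
         (j ∈ W ∧ i ∉ W ∧ 2 * (W.filter (G.Adj i)).card = W.card) then 1 else 0) :
    L.rank ≤ 2 ∧
      (A + L).rank ∈ ({A.rank - 2, A.rank, A.rank + 2} : Set ℕ) := by
  set T := Finset.univ.filter fun v => v ∉ W ∧ 2 * (W.filter (G.Adj v)).card = W.card
  have hLdecomp : L =
      vecMulVec (fun k => if k ∈ W then 1 else 0) (fun k => if k ∈ T then 1 else 0) +
      vecMulVec (fun k => if k ∈ T then 1 else 0) (fun k => if k ∈ W then 1 else 0) := by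
    ext i j
    rw [vecMulVec_indicator_add_vecMulVec_indicator_apply
      (Finset.disjoint_left.2 fun v hv hvT => (Finset.mem_filter.1 hvT).2.1 hv), hL]
    simp [T]
  have hLrank : L.rank ≤ 2 := hLdecomp ▸
    (rank_add_le _ _).trans (add_le_add (rank_vecMulVec_le _ _) (rank_vecMulVec_le _ _))
  have hAskew : Aᵀ = -A := by
    rw [hA, SimpleGraph.transpose_adjMatrix]
    ext
    simp
  have hLskew : Lᵀ = -L := by
    ext
    simp [hL, or_comm]
  have hAeven : Even A.rank := even_rank_of_transpose_eq_neg hAskew (by simp [hA])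
  have hALeven : Even (A + L).rank := even_rank_of_transpose_eq_neg
    (by rw [transpose_add, hAskew, hLskew, neg_add]) (by simp +contextual [hA, hL])
  exact ⟨hLrank, rank_add_mem_of_even hAeven hALeven hLrank⟩

/-- Godsil–McKay switching: if `W` induces a regular subgraph of `G` and every vertex
outside `W` has `|W|`, `|W|/2` or `0` neighbors in `W`, then the GF(2) change matrix `L`
(with `L i j = 1` iff one of `i, j` lies in `W`, the other lies outside `W` and has
exactly `|W|/2` neighbors in `W`) has 2-rank at most 2, and hence the 2-rank of the
switched graph (adjacency matrix `A + L` over GF(2)) differs from that of `G` by at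
most 2 (and 2-ranks are even, so it is `rank A - 2`, `rank A`, or `rank A + 2`). -/
theorem gm_switching_two_rank {V : Type*} [Fintype V] [DecidableEq V]
    (G : SimpleGraph V) [DecidableRel G.Adj] (W : Finset V)
    (hreg : ∃ d : ℕ, ∀ w ∈ W, (W.filter (G.Adj w)).card = d)
    (hout : ∀ v ∉ W, (W.filter (G.Adj v)).card = W.card ∨
        2 * (W.filter (G.Adj v)).card = W.card ∨ (W.filter (G.Adj v)).card = 0)
    (A : Matrix V V (ZMod 2)) (hA : A = G.adjMatrix (ZMod 2))
    (L : Matrix V V (ZMod 2))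
    (hL : ∀ i j, L i j =
      if (i ∈ W ∧ j ∉ W ∧ 2 * (W.filter (G.Adj j)).card = W.card) ∨
         (j ∈ W ∧ i ∉ W ∧ 2 * (W.filter (G.Adj i)).card = W.card) then 1 else 0) :
    L.rank ≤ 2 ∧
      (A + L).rank ∈ ({A.rank - 2, A.rank, A.rank + 2} : Set ℕ) :=
  gm_switching_two_rank_general G W A hA L hL
end

section
/- Let A₁, A₂ be symmetric matrices over GF(2) with zero diagonal and let A = A₁ ⊗ J + J ⊗ A₂ over GF(2) (J all-ones of matching sizes). Then the all-ones vector lies in the column space of A if and only if the all-ones vector lies in the column space of A₁ or in the column space of A₂. -/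
/-!
If `A₁ v = 1` with `A₁` symmetric with zero diagonal over a ring of characteristic two, then
`∑ vᵢ = vᵀ A₁ v = 0`, since the off-diagonal terms of the quadratic form cancel in pairs. Hence for
any `e` with `∑ eⱼ = 1` the vector `v ⊗ e` satisfies `A (v ⊗ e) = (A₁ v) ⊗ 1 + 0 = 1`, and
symmetrically for `A₂`. Conversely, `A w` at `(i, j)` is `(A₁ v₁)ᵢ + (A₂ v₂)ⱼ`, where `v₁` and `v₂`
are the row and column sums of `w`; if this is `1` for all `i, j`, then over GF(2) one of
`A₁ v₁`, `A₂ v₂` is the all-ones vector.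
-/

open Kronecker Matrix

section QuadraticForm

variable {n R : Type*} [Fintype n] [CommRing R] [CharP R 2]

theorem Matrix.dotProduct_mulVec_self_eq_zero_s15 {A : Matrix n n R} (hA : A.IsSymm)
    (hdiag : ∀ i, A i i = 0) (v : n → R) : v ⬝ᵥ (A *ᵥ v) = 0 := by
  have hsum : v ⬝ᵥ (A *ᵥ v) = ∑ p : n × n, v p.1 * A p.1 p.2 * v p.2 := by
    simp only [dotProduct, mulVec, Finset.mul_sum, Fintype.sum_prod_type, mul_assoc]
  rw [hsum]
  refine Finset.sum_ninvolution Prod.swap (fun ⟨i, j⟩ => ?_) (fun ⟨i, j⟩ hij hswap => hij ?_)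
    (fun _ => Finset.mem_univ _) Prod.swap_swap
  · rw [Prod.swap_prod_mk, hA.apply i j]
    linear_combination CharTwo.add_self_eq_zero (v i * A i j * v j)
  · obtain rfl : j = i := congrArg Prod.fst hswap
    rw [hdiag, mul_zero, zero_mul]

theorem Matrix.sum_eq_zero_of_mulVec_eq_one {A : Matrix n n R} (hA : A.IsSymm)
    (hdiag : ∀ i, A i i = 0) {v : n → R} (hv : A *ᵥ v = 1) : ∑ i, v i = 0 := by
  simpa [hv, dotProduct_one] using dotProduct_mulVec_self_eq_zero_s15 hA hdiag v

end QuadraticForm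

section AllOnes

variable {m n R : Type*} [Fintype m] [Fintype n] [CommSemiring R]

theorem Matrix.kronecker_allOnes_mulVec_apply (A : Matrix m m R) (w : m × n → R)
    (i : m) (j : n) :
    (A ⊗ₖ (of fun _ _ => (1 : R)) *ᵥ w) (i, j) = (A *ᵥ fun k => ∑ l, w (k, l)) i := by
  simp only [mulVec, dotProduct, kroneckerMap_apply, of_apply, mul_one, Fintype.sum_prod_type,
    Finset.mul_sum]

theorem Matrix.allOnes_kronecker_mulVec_apply (B : Matrix n n R) (w : m × n → R)
    (i : m) (j : n) :
    ((of fun _ _ => (1 : R)) ⊗ₖ B *ᵥ w) (i, j) = (B *ᵥ fun l => ∑ k, w (k, l)) j := by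
  simp only [mulVec, dotProduct, kroneckerMap_apply, of_apply, one_mul, Fintype.sum_prod_type,
    Finset.mul_sum]
  exact Finset.sum_comm

theorem Matrix.kroneckerSum_allOnes_mulVec_apply (A : Matrix m m R) (B : Matrix n n R)
    (w : m × n → R) (i : m) (j : n) :
    ((A ⊗ₖ (of fun _ _ => (1 : R)) + (of fun _ _ => (1 : R)) ⊗ₖ B) *ᵥ w) (i, j) =
      (A *ᵥ fun k => ∑ l, w (k, l)) i + (B *ᵥ fun l => ∑ k, w (k, l)) j := by
  rw [add_mulVec, Pi.add_apply, kronecker_allOnes_mulVec_apply, allOnes_kronecker_mulVec_apply]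

theorem Matrix.kroneckerSum_allOnes_mulVec_tmul_apply (A : Matrix m m R) (B : Matrix n n R)
    (x : m → R) (y : n → R) (i : m) (j : n) :
    ((A ⊗ₖ (of fun _ _ => (1 : R)) + (of fun _ _ => (1 : R)) ⊗ₖ B) *ᵥ
        fun p => x p.1 * y p.2) (i, j) =
      (A *ᵥ x) i * ∑ l, y l + (∑ k, x k) * (B *ᵥ y) j := by
  rw [kroneckerSum_allOnes_mulVec_apply]
  simp_rw [← Finset.mul_sum, ← Finset.sum_mul, mul_comm _ (∑ l, y l), ← smul_eq_mul,
    ← Pi.smul_def, mulVec_smul, Pi.smul_apply]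

end AllOnes

theorem ZMod.eq_one_or_eq_one_of_forall_add_eq_one {α β : Type*} {f : α → ZMod 2}
    {g : β → ZMod 2} (h : ∀ i j, f i + g j = 1) : f = 1 ∨ g = 1 := by
  by_cases hf : f = 1
  · exact .inl hf
  obtain ⟨i, hi⟩ := Function.ne_iff.mp hf
  have hi0 : f i = 0 := (by decide : ∀ x : ZMod 2, x ≠ 1 → x = 0) _ hi
  exact .inr (funext fun j => by simpa [hi0] using h i j)

/-- For symmetric zero-diagonal matrices `A₁, A₂` over GF(2) and
`A = A₁ ⊗ J + J ⊗ A₂`, the all-ones vector lies in the column space of `A`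
iff it lies in the column space of `A₁` or in the column space of `A₂`. -/
theorem one_mem_colSpace_kroneckerSum_iff {n₁ n₂ : Type*} [Fintype n₁] [Fintype n₂]
    (A₁ : Matrix n₁ n₁ (ZMod 2)) (A₂ : Matrix n₂ n₂ (ZMod 2))
    (h₁symm : A₁.IsSymm) (h₁diag : ∀ i, A₁ i i = 0)
    (h₂symm : A₂.IsSymm) (h₂diag : ∀ i, A₂ i i = 0)
    (J₁ : Matrix n₁ n₁ (ZMod 2)) (hJ₁ : ∀ i j, J₁ i j = 1)
    (J₂ : Matrix n₂ n₂ (ZMod 2)) (hJ₂ : ∀ i j, J₂ i j = 1) :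
    (1 : n₁ × n₂ → ZMod 2) ∈ LinearMap.range (A₁ ⊗ₖ J₂ + J₁ ⊗ₖ A₂).mulVecLin ↔
      ((1 : n₁ → ZMod 2) ∈ LinearMap.range A₁.mulVecLin ∨
        (1 : n₂ → ZMod 2) ∈ LinearMap.range A₂.mulVecLin) := by
  classical
  obtain rfl : J₁ = of fun _ _ => 1 := ext hJ₁
  obtain rfl : J₂ = of fun _ _ => 1 := ext hJ₂
  simp only [LinearMap.mem_range, mulVecLin_apply]
  constructor
  · rintro ⟨w, hw⟩
    have hsplit : ∀ i j,
        (A₁ *ᵥ fun k => ∑ l, w (k, l)) i + (A₂ *ᵥ fun l => ∑ k, w (k, l)) j = 1 := by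
      intro i j
      rw [← kroneckerSum_allOnes_mulVec_apply, hw, Pi.one_apply]
    exact (ZMod.eq_one_or_eq_one_of_forall_add_eq_one hsplit).imp (⟨_, ·⟩) (⟨_, ·⟩)
  · rintro (⟨x, hx⟩ | ⟨y, hy⟩)
    · rcases isEmpty_or_nonempty n₂ with _ | ⟨⟨j₀⟩⟩
      · exact ⟨0, Subsingleton.elim _ _⟩
      refine ⟨fun p => x p.1 * (Pi.single j₀ 1 : n₂ → ZMod 2) p.2, funext fun ⟨i, j⟩ => ?_⟩
      rw [kroneckerSum_allOnes_mulVec_tmul_apply, hx, sum_eq_zero_of_mulVec_eq_one h₁symm h₁diag hx]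
      simp
    · rcases isEmpty_or_nonempty n₁ with _ | ⟨⟨i₀⟩⟩
      · exact ⟨0, Subsingleton.elim _ _⟩
      refine ⟨fun p => (Pi.single i₀ 1 : n₁ → ZMod 2) p.1 * y p.2, funext fun ⟨i, j⟩ => ?_⟩
      rw [kroneckerSum_allOnes_mulVec_tmul_apply, hy, sum_eq_zero_of_mulVec_eq_one h₂symm h₂diag hy]
      simp
end

section
/- Let A₁, A₂ be symmetric matrices over GF(2) with zero diagonal such that A₁ has a zero column and A₂ has a zero column (i.e., the corresponding graphs have isolated vertices). Then the GF(2) rank of A = A₁ ⊗ J + J ⊗ A₂ equals rank(A₁) + rank(A₂). -/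
/-!
Writing `J` for an all-ones matrix, `(A ⊗ J + J ⊗ B) u` is `A r ⊗ 1 + 1 ⊗ B c`, where `r` and
`c` are the row and column sums of `u` viewed as a matrix. A zero column of `B` lets `u` be
concentrated in that column, which kills the second summand while `r` stays arbitrary, and
symmetrically for `A`; hence the column space of `A ⊗ J + J ⊗ B` is `Col A ⊗ 1 + 1 ⊗ Col B`.
A zero row of `A` keeps the all-ones vector out of `Col A`, so this sum is direct, and both
embeddings `v ↦ v ⊗ 1`, `w ↦ 1 ⊗ w` are injective.
-/

open Kronecker Matrix LinearMap

namespace Matrix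

variable {m m' n n' : Type*} [Fintype m'] [Fintype n']

section CommSemiring

variable {R : Type*} [CommSemiring R]

theorem kronecker_ones_add_ones_kronecker_mulVec (A : Matrix m m' R) (B : Matrix n n' R)
    (u : m' × n' → R) :
    (A ⊗ₖ of (fun _ _ => 1) + of (fun _ _ => 1) ⊗ₖ B) *ᵥ u =
      funLeft R R Prod.fst (A *ᵥ fun i => ∑ k, u (i, k)) +
        funLeft R R Prod.snd (B *ᵥ fun k => ∑ i, u (i, k)) := by
  ext ⟨i, k⟩
  simp only [mulVec, dotProduct, add_apply, kroneckerMap_apply, of_apply, mul_one, one_mul,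
    Pi.add_apply, funLeft_apply, add_mul, Finset.sum_add_distrib, Fintype.sum_prod_type,
    Finset.mul_sum]
  rw [Finset.sum_comm (f := fun _ _ => B k _ * _)]

theorem range_kronecker_ones_add_ones_kronecker_le (A : Matrix m m' R) (B : Matrix n n' R) :
    range (A ⊗ₖ of (fun _ _ => 1) + of (fun _ _ => 1) ⊗ₖ B).mulVecLin ≤
      (range A.mulVecLin).map (funLeft R R Prod.fst) ⊔
        (range B.mulVecLin).map (funLeft R R Prod.snd) := by
  rintro _ ⟨u, rfl⟩
  rw [mulVecLin_apply, kronecker_ones_add_ones_kronecker_mulVec]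
  exact Submodule.add_mem_sup ⟨_, ⟨_, rfl⟩, rfl⟩ ⟨_, ⟨_, rfl⟩, rfl⟩

theorem map_fst_range_le_range_kronecker_ones_add_ones_kronecker (A : Matrix m m' R)
    {B : Matrix n n' R} {j : n'} (hj : ∀ i, B i j = 0) :
    (range A.mulVecLin).map (funLeft R R Prod.fst) ≤
      range (A ⊗ₖ of (fun _ _ => 1) + of (fun _ _ => 1) ⊗ₖ B).mulVecLin := by
  classical
  rintro _ ⟨_, ⟨y, rfl⟩, rfl⟩
  refine ⟨fun p => (Pi.single j (y p.1) : n' → R) p.2, ?_⟩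
  have hrow : (fun i => ∑ k, Pi.single j (y i) k) = y := by
    ext i
    simp
  have hcol : (B *ᵥ fun k => ∑ i, Pi.single (M := fun _ => R) j (y i) k) = 0 := by
    ext i
    simp [mulVec, dotProduct, Pi.single_apply, hj]
  rw [mulVecLin_apply, kronecker_ones_add_ones_kronecker_mulVec, hrow, hcol, map_zero,
    add_zero, mulVecLin_apply]

theorem map_snd_range_le_range_kronecker_ones_add_ones_kronecker {A : Matrix m m' R}
    (B : Matrix n n' R) {j : m'} (hj : ∀ i, A i j = 0) :
    (range B.mulVecLin).map (funLeft R R Prod.snd) ≤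
      range (A ⊗ₖ of (fun _ _ => 1) + of (fun _ _ => 1) ⊗ₖ B).mulVecLin := by
  classical
  rintro _ ⟨_, ⟨z, rfl⟩, rfl⟩
  refine ⟨fun p => (Pi.single j (z p.2) : m' → R) p.1, ?_⟩
  have hrow : (A *ᵥ fun i => ∑ k, Pi.single (M := fun _ => R) j (z k) i) = 0 := by
    ext i
    simp [mulVec, dotProduct, Pi.single_apply, hj]
  have hcol : (fun k => ∑ i, Pi.single j (z k) i) = z := by
    ext k
    simp
  rw [mulVecLin_apply, kronecker_ones_add_ones_kronecker_mulVec, hrow, hcol, map_zero,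
    zero_add, mulVecLin_apply]

theorem range_kronecker_ones_add_ones_kronecker {A : Matrix m m' R} {B : Matrix n n' R}
    {j₁ : m'} (hj₁ : ∀ i, A i j₁ = 0) {j₂ : n'} (hj₂ : ∀ i, B i j₂ = 0) :
    range (A ⊗ₖ of (fun _ _ => 1) + of (fun _ _ => 1) ⊗ₖ B).mulVecLin =
      (range A.mulVecLin).map (funLeft R R Prod.fst) ⊔
        (range B.mulVecLin).map (funLeft R R Prod.snd) :=
  (range_kronecker_ones_add_ones_kronecker_le A B).antisymm <| sup_le
    (map_fst_range_le_range_kronecker_ones_add_ones_kronecker A hj₂)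
    (map_snd_range_le_range_kronecker_ones_add_ones_kronecker B hj₁)

end CommSemiring

end Matrix

theorem Submodule.disjoint_map_funLeft_fst_snd {R : Type*} [Semiring R] {m n : Type*}
    {p : Submodule R (m → R)} {i₀ : m} (hp : ∀ v ∈ p, v i₀ = 0) (q : Submodule R (n → R)) :
    Disjoint (p.map (funLeft R R (Prod.fst : m × n → m)))
      (q.map (funLeft R R (Prod.snd : m × n → n))) := by
  rw [Submodule.disjoint_def]
  rintro _ ⟨v, hv, rfl⟩ ⟨w, -, hvw⟩
  have hw : w = 0 := funext fun k => (congrFun hvw (i₀, k)).trans (hp v hv)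
  rw [← hvw, hw, map_zero]

theorem Submodule.finrank_map_funLeft_fst_sup_map_funLeft_snd {K : Type*} [Field K]
    {m n : Type*} [Finite m] [Finite n] [Nonempty m] [Nonempty n]
    (p : Submodule K (m → K)) (q : Submodule K (n → K))
    (hpq : Disjoint (p.map (funLeft K K (Prod.fst : m × n → m)))
      (q.map (funLeft K K (Prod.snd : m × n → n)))) :
    Module.finrank K ↥(p.map (funLeft K K Prod.fst) ⊔ q.map (funLeft K K Prod.snd)) =
      Module.finrank K p + Module.finrank K q := by
  have hp := (p.equivMapOfInjective _
    (funLeft_injective_of_surjective K K _ (Prod.fst_surjective (β := n)))).finrank_eq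
  have hq := (q.equivMapOfInjective _
    (funLeft_injective_of_surjective K K _ (Prod.snd_surjective (α := m)))).finrank_eq
  have hsum := Submodule.finrank_sup_add_finrank_inf_eq
    (p.map (funLeft K K (Prod.fst : m × n → m))) (q.map (funLeft K K (Prod.snd : m × n → n)))
  rw [hpq.eq_bot, finrank_bot, add_zero] at hsum
  rw [hsum, hp, hq]

theorem Matrix.rank_kronecker_ones_add_ones_kronecker {K : Type*} [Field K]
    {m m' n n' : Type*} [Fintype m] [Fintype m'] [Fintype n] [Fintype n'] [Nonempty n]
    {A : Matrix m m' K} {B : Matrix n n' K} {i₁ : m} (hi₁ : ∀ j, A i₁ j = 0)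
    {j₁ : m'} (hj₁ : ∀ i, A i j₁ = 0) {j₂ : n'} (hj₂ : ∀ i, B i j₂ = 0) :
    (A ⊗ₖ of (fun _ _ => 1) + of (fun _ _ => 1) ⊗ₖ B).rank = A.rank + B.rank := by
  have : Nonempty m := ⟨i₁⟩
  have hdisj := Submodule.disjoint_map_funLeft_fst_snd (n := n) (p := range A.mulVecLin)
    (i₀ := i₁) (by rintro _ ⟨y, rfl⟩; simp [mulVec, dotProduct, hi₁]) (range B.mulVecLin)
  rw [rank, rank, rank, range_kronecker_ones_add_ones_kronecker hj₁ hj₂,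
    Submodule.finrank_map_funLeft_fst_sup_map_funLeft_snd _ _ hdisj]

theorem rank_kroneckerSum_of_zero_columns_general {n₁ n₂ : Type*} [Fintype n₁] [Fintype n₂]
    (A₁ : Matrix n₁ n₁ (ZMod 2)) (A₂ : Matrix n₂ n₂ (ZMod 2))
    (h₁symm : A₁.IsSymm)
    (h₁col : ∃ j, ∀ i, A₁ i j = 0) (h₂col : ∃ j, ∀ i, A₂ i j = 0)
    (J₁ : Matrix n₁ n₁ (ZMod 2)) (hJ₁ : ∀ i j, J₁ i j = 1)
    (J₂ : Matrix n₂ n₂ (ZMod 2)) (hJ₂ : ∀ i j, J₂ i j = 1) :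
    (A₁ ⊗ₖ J₂ + J₁ ⊗ₖ A₂).rank = A₁.rank + A₂.rank := by
  obtain ⟨j₁, hj₁⟩ := h₁col
  obtain ⟨j₂, hj₂⟩ := h₂col
  obtain rfl : J₁ = of fun _ _ => 1 := Matrix.ext hJ₁
  obtain rfl : J₂ = of fun _ _ => 1 := Matrix.ext hJ₂
  have : Nonempty n₂ := ⟨j₂⟩
  exact rank_kronecker_ones_add_ones_kronecker (fun j => (h₁symm.apply j₁ j).symm.trans (hj₁ j))
    hj₁ hj₂

/-- If `A₁, A₂` are symmetric zero-diagonal matrices over GF(2), each having a zero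
column (the corresponding graphs have isolated vertices), then the GF(2) rank of
`A₁ ⊗ J + J ⊗ A₂` equals `rank A₁ + rank A₂`. -/
theorem rank_kroneckerSum_of_zero_columns {n₁ n₂ : Type*} [Fintype n₁] [Fintype n₂]
    [DecidableEq n₁] [DecidableEq n₂]
    (A₁ : Matrix n₁ n₁ (ZMod 2)) (A₂ : Matrix n₂ n₂ (ZMod 2))
    (h₁symm : A₁.IsSymm) (h₁diag : ∀ i, A₁ i i = 0)
    (h₂symm : A₂.IsSymm) (h₂diag : ∀ i, A₂ i i = 0)
    (h₁col : ∃ j, ∀ i, A₁ i j = 0) (h₂col : ∃ j, ∀ i, A₂ i j = 0)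
    (J₁ : Matrix n₁ n₁ (ZMod 2)) (hJ₁ : ∀ i j, J₁ i j = 1)
    (J₂ : Matrix n₂ n₂ (ZMod 2)) (hJ₂ : ∀ i j, J₂ i j = 1) :
    (A₁ ⊗ₖ J₂ + J₁ ⊗ₖ A₂).rank = A₁.rank + A₂.rank :=
  rank_kroneckerSum_of_zero_columns_general A₁ A₂ h₁symm h₁col h₂col J₁ hJ₁ J₂ hJ₂
end
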